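/- Let P be the uniform probability measure on adjacency matrices of simple d-regular graphs on N vertices, let i₁,j₁,k₁,l₁,…,i_b,j_b,k_b,l_b be distinct indices, and let F be a function on symmetric matrices. Then E[F(A)·∏_{a=1}^b χ_{i_a j_a}^{k_a l_a}(A)] = E[F(A + ∑_{a=1}^b ξ_{i_a j_a}^{k_a l_a})·∏_{a=1}^b χ_{i_a k_a}^{j_a l_a}(A)]. -/
import Mathlib

/-- The elementary symmetric matrix `Δ_{ab}`. -/
def DeltaMat (N : ℕ) (a b : Fin N) : Matrix (Fin N) (Fin N) ℝ :=
  Matrix.of fun s t =>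
    (if a = s ∧ b = t then (1 : ℝ) else 0) + (if a = t ∧ b = s then (1 : ℝ) else 0)

/-- The switching matrix `ξ_{ij}^{kl} = Δ_{ij} + Δ_{kl} − Δ_{ik} − Δ_{jl}`. -/
def xiMat (N : ℕ) (i j k l : Fin N) : Matrix (Fin N) (Fin N) ℝ :=
  DeltaMat N i j + DeltaMat N k l - DeltaMat N i k - DeltaMat N j l

/-- `A` is the adjacency matrix of a simple `d`-regular graph on `N` vertices. -/
def IsRegAdj (N : ℕ) (d : ℝ) (A : Matrix (Fin N) (Fin N) ℝ) : Prop :=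
  A.IsSymm ∧ (∀ i j, A i j = 0 ∨ A i j = 1) ∧ (∀ i, A i i = 0) ∧ ∀ i, ∑ j, A i j = d

/-- The switchability indicator `χ_{ij}^{kl}(A) = A_{ij}A_{kl}(1−A_{ik})(1−A_{jl})`. -/
def chiInd (N : ℕ) (i j k l : Fin N) (A : Matrix (Fin N) (Fin N) ℝ) : ℝ :=
  A i j * A k l * (1 - A i k) * (1 - A j l)

lemma DeltaMat_row (N : ℕ) (a b s : Fin N) :
    ∑ t, DeltaMat N a b s t = (if a = s then (1:ℝ) else 0) + (if b = s then 1 else 0) := by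
  simp only [DeltaMat, Matrix.of_apply]
  rw [Finset.sum_add_distrib]
  congr 1
  · simp [ite_and]
  · simp [ite_and, @eq_comm _ a, and_comm]

lemma DeltaMat_comm (N : ℕ) (a b s t : Fin N) : DeltaMat N a b s t = DeltaMat N a b t s := by
  simp [DeltaMat]; rw [add_comm]

lemma xiMat_comm (N : ℕ) (i j k l s t : Fin N) :
    xiMat N i j k l s t = xiMat N i j k l t s := by
  simp only [xiMat, Matrix.sub_apply, Matrix.add_apply]
  rw [DeltaMat_comm N i j, DeltaMat_comm N k l, DeltaMat_comm N i k, DeltaMat_comm N j l]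

lemma xiMat_row (N : ℕ) (i j k l s : Fin N) : ∑ t, xiMat N i j k l s t = 0 := by
  simp only [xiMat, Matrix.sub_apply, Matrix.add_apply, Finset.sum_sub_distrib,
    Finset.sum_add_distrib, DeltaMat_row]
  ring

lemma xiMat_swap (N : ℕ) (i j k l : Fin N) : xiMat N i k j l = -xiMat N i j k l := by
  unfold xiMat; abel

lemma xiMat_apply_ne (N : ℕ) (i j k l s t : Fin N)
    (h1 : ¬(i = s ∧ j = t)) (h2 : ¬(i = t ∧ j = s))
    (h3 : ¬(k = s ∧ l = t)) (h4 : ¬(k = t ∧ l = s))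
    (h5 : ¬(i = s ∧ k = t)) (h6 : ¬(i = t ∧ k = s))
    (h7 : ¬(j = s ∧ l = t)) (h8 : ¬(j = t ∧ l = s)) :
    xiMat N i j k l s t = 0 := by
  simp [xiMat, DeltaMat, h1, h2, h3, h4, h5, h6, h7, h8]

section vals
set_option linter.unusedSectionVars false
variable (N : ℕ) (i j k l : Fin N) (hij : i ≠ j) (hik : i ≠ k) (hil : i ≠ l)
  (hjk : j ≠ k) (hjl : j ≠ l) (hkl : k ≠ l)
include hij hik hil hjk hjl hkl

lemma xiMat_apply_ij : xiMat N i j k l i j = 1 := by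
  simp [xiMat, DeltaMat, hij, hik, hil, hjk, hjl, hkl,
    hij.symm, hik.symm, hil.symm, hjk.symm, hjl.symm, hkl.symm]
lemma xiMat_apply_kl : xiMat N i j k l k l = 1 := by
  simp [xiMat, DeltaMat, hij, hik, hil, hjk, hjl, hkl,
    hij.symm, hik.symm, hil.symm, hjk.symm, hjl.symm, hkl.symm]
lemma xiMat_apply_ik : xiMat N i j k l i k = -1 := by
  simp [xiMat, DeltaMat, hij, hik, hil, hjk, hjl, hkl,
    hij.symm, hik.symm, hil.symm, hjk.symm, hjl.symm, hkl.symm]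
lemma xiMat_apply_jl : xiMat N i j k l j l = -1 := by
  simp [xiMat, DeltaMat, hij, hik, hil, hjk, hjl, hkl,
    hij.symm, hik.symm, hil.symm, hjk.symm, hjl.symm, hkl.symm]
end vals

lemma switch_forward (N b : ℕ) (d : ℝ) (i j k l : Fin b → Fin N)
    (hii : ∀ a a', i a = i a' → a = a') (hjj : ∀ a a', j a = j a' → a = a')
    (hkk : ∀ a a', k a = k a' → a = a')
    (hij : ∀ a a', i a ≠ j a') (hik : ∀ a a', i a ≠ k a') (hil : ∀ a a', i a ≠ l a')
    (hjk : ∀ a a', j a ≠ k a') (hjl : ∀ a a', j a ≠ l a') (hkl : ∀ a a', k a ≠ l a')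
    (A : Matrix (Fin N) (Fin N) ℝ) (hA : IsRegAdj N d A)
    (hP : ∀ a, A (i a) (j a) = 1 ∧ A (k a) (l a) = 1 ∧ A (i a) (k a) = 0 ∧ A (j a) (l a) = 0) :
    IsRegAdj N d (A - ∑ a, xiMat N (i a) (j a) (k a) (l a)) ∧
    ∀ a, (A - ∑ a, xiMat N (i a) (j a) (k a) (l a)) (i a) (k a) = 1 ∧
      (A - ∑ a, xiMat N (i a) (j a) (k a) (l a)) (j a) (l a) = 1 ∧
      (A - ∑ a, xiMat N (i a) (j a) (k a) (l a)) (i a) (j a) = 0 ∧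
      (A - ∑ a, xiMat N (i a) (j a) (k a) (l a)) (k a) (l a) = 0 := by
  set ξ := ∑ a, xiMat N (i a) (j a) (k a) (l a) with hξ
  have hAs : ∀ s t, A t s = A s t := fun s t => congrFun (congrFun hA.1 s) t
  have hA01 := hA.2.1
  have hsym : ∀ s t, ξ s t = ξ t s := fun s t => by
    rw [hξ, Matrix.sum_apply, Matrix.sum_apply]
    exact Finset.sum_congr rfl fun a _ => xiMat_comm ..
  have hIJ : ∀ a₀, ξ (i a₀) (j a₀) = 1 := by
    intro a₀
    rw [hξ, Matrix.sum_apply, Finset.sum_eq_single a₀]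
    · exact xiMat_apply_ij N _ _ _ _ (hij a₀ a₀) (hik a₀ a₀) (hil a₀ a₀) (hjk a₀ a₀)
        (hjl a₀ a₀) (hkl a₀ a₀)
    · intro a _ hne
      refine xiMat_apply_ne N _ _ _ _ _ _ ?_ ?_ ?_ ?_ ?_ ?_ ?_ ?_
      · exact fun h => hne (hii a a₀ h.1)
      · exact fun h => hij a a₀ h.1
      · exact fun h => hik a₀ a h.1.symm
      · exact fun h => hjk a₀ a h.1.symm
      · exact fun h => hne (hii a a₀ h.1)
      · exact fun h => hij a a₀ h.1
      · exact fun h => hij a₀ a h.1.symm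
      · exact fun h => hne (hjj a a₀ h.1)
    · exact fun h => absurd (Finset.mem_univ a₀) h
  have hKL : ∀ a₀, ξ (k a₀) (l a₀) = 1 := by
    intro a₀
    rw [hξ, Matrix.sum_apply, Finset.sum_eq_single a₀]
    · exact xiMat_apply_kl N _ _ _ _ (hij a₀ a₀) (hik a₀ a₀) (hil a₀ a₀) (hjk a₀ a₀)
        (hjl a₀ a₀) (hkl a₀ a₀)
    · intro a _ hne
      refine xiMat_apply_ne N _ _ _ _ _ _ ?_ ?_ ?_ ?_ ?_ ?_ ?_ ?_
      · exact fun h => hik a a₀ h.1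
      · exact fun h => hil a a₀ h.1
      · exact fun h => hne (hkk a a₀ h.1)
      · exact fun h => hkl a a₀ h.1
      · exact fun h => hik a a₀ h.1
      · exact fun h => hil a a₀ h.1
      · exact fun h => hjk a a₀ h.1
      · exact fun h => hjl a a₀ h.1
    · exact fun h => absurd (Finset.mem_univ a₀) h
  have hIK : ∀ a₀, ξ (i a₀) (k a₀) = -1 := by
    intro a₀
    rw [hξ, Matrix.sum_apply, Finset.sum_eq_single a₀]
    · exact xiMat_apply_ik N _ _ _ _ (hij a₀ a₀) (hik a₀ a₀) (hil a₀ a₀) (hjk a₀ a₀)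
        (hjl a₀ a₀) (hkl a₀ a₀)
    · intro a _ hne
      refine xiMat_apply_ne N _ _ _ _ _ _ ?_ ?_ ?_ ?_ ?_ ?_ ?_ ?_
      · exact fun h => hjk a a₀ h.2
      · exact fun h => hik a a₀ h.1
      · exact fun h => hik a₀ a h.1.symm
      · exact fun h => hne (hkk a a₀ h.1)
      · exact fun h => hne (hii a a₀ h.1)
      · exact fun h => hik a a₀ h.1
      · exact fun h => hij a₀ a h.1.symm
      · exact fun h => hjk a a₀ h.1
    · exact fun h => absurd (Finset.mem_univ a₀) h
  have hJL : ∀ a₀, ξ (j a₀) (l a₀) = -1 := by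
    intro a₀
    rw [hξ, Matrix.sum_apply, Finset.sum_eq_single a₀]
    · exact xiMat_apply_jl N _ _ _ _ (hij a₀ a₀) (hik a₀ a₀) (hil a₀ a₀) (hjk a₀ a₀)
        (hjl a₀ a₀) (hkl a₀ a₀)
    · intro a _ hne
      refine xiMat_apply_ne N _ _ _ _ _ _ ?_ ?_ ?_ ?_ ?_ ?_ ?_ ?_
      · exact fun h => hij a a₀ h.1
      · exact fun h => hil a a₀ h.1
      · exact fun h => hjk a₀ a h.1.symm
      · exact fun h => hkl a a₀ h.1
      · exact fun h => hij a a₀ h.1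
      · exact fun h => hil a a₀ h.1
      · exact fun h => hne (hjj a a₀ h.1)
      · exact fun h => hjl a a₀ h.1
    · exact fun h => absurd (Finset.mem_univ a₀) h
  have hrow : ∀ s, ∑ t, ξ s t = 0 := by
    intro s
    rw [hξ]
    simp only [Matrix.sum_apply]
    rw [Finset.sum_comm]
    simp [xiMat_row]
  have hdiag : ∀ s, ξ s s = 0 := by
    intro s
    rw [hξ, Matrix.sum_apply]
    refine Finset.sum_eq_zero fun a _ => ?_
    refine xiMat_apply_ne N _ _ _ _ _ _ ?_ ?_ ?_ ?_ ?_ ?_ ?_ ?_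
    · exact fun h => hij a a (h.1.trans h.2.symm)
    · exact fun h => hij a a (h.1.trans h.2.symm)
    · exact fun h => hkl a a (h.1.trans h.2.symm)
    · exact fun h => hkl a a (h.1.trans h.2.symm)
    · exact fun h => hik a a (h.1.trans h.2.symm)
    · exact fun h => hik a a (h.1.trans h.2.symm)
    · exact fun h => hjl a a (h.1.trans h.2.symm)
    · exact fun h => hjl a a (h.1.trans h.2.symm)
  refine ⟨⟨?_, ?_, ?_, ?_⟩, ?_⟩
  · ext s t
    simp only [Matrix.transpose_apply, Matrix.sub_apply]
    rw [hAs s t, hsym t s]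
  · intro s t
    by_cases hc : ∃ a, (s = i a ∧ t = j a) ∨ (s = j a ∧ t = i a) ∨ (s = k a ∧ t = l a) ∨
        (s = l a ∧ t = k a) ∨ (s = i a ∧ t = k a) ∨ (s = k a ∧ t = i a) ∨
        (s = j a ∧ t = l a) ∨ (s = l a ∧ t = j a)
    · obtain ⟨a, hcase⟩ := hc
      rcases hcase with ⟨rfl, rfl⟩|⟨rfl, rfl⟩|⟨rfl, rfl⟩|⟨rfl, rfl⟩|⟨rfl, rfl⟩|⟨rfl, rfl⟩|
        ⟨rfl, rfl⟩|⟨rfl, rfl⟩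
      · left; rw [Matrix.sub_apply, (hP a).1, hIJ a]; ring
      · left; rw [Matrix.sub_apply, hAs (i a) (j a), hsym (j a) (i a), (hP a).1, hIJ a]; ring
      · left; rw [Matrix.sub_apply, (hP a).2.1, hKL a]; ring
      · left; rw [Matrix.sub_apply, hAs (k a) (l a), hsym (l a) (k a), (hP a).2.1, hKL a]; ring
      · right; rw [Matrix.sub_apply, (hP a).2.2.1, hIK a]; ring
      · right; rw [Matrix.sub_apply, hAs (i a) (k a), hsym (k a) (i a), (hP a).2.2.1, hIK a]
        ring
      · right; rw [Matrix.sub_apply, (hP a).2.2.2, hJL a]; ring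
      · right; rw [Matrix.sub_apply, hAs (j a) (l a), hsym (l a) (j a), (hP a).2.2.2, hJL a]
        ring
    · have hz : ξ s t = 0 := by
        rw [hξ, Matrix.sum_apply]
        refine Finset.sum_eq_zero fun a _ => ?_
        refine xiMat_apply_ne N _ _ _ _ _ _ ?_ ?_ ?_ ?_ ?_ ?_ ?_ ?_
        · exact fun h => hc ⟨a, Or.inl ⟨h.1.symm, h.2.symm⟩⟩
        · exact fun h => hc ⟨a, Or.inr (Or.inl ⟨h.2.symm, h.1.symm⟩)⟩
        · exact fun h => hc ⟨a, Or.inr (Or.inr (Or.inl ⟨h.1.symm, h.2.symm⟩))⟩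
        · exact fun h => hc ⟨a, Or.inr (Or.inr (Or.inr (Or.inl ⟨h.2.symm, h.1.symm⟩)))⟩
        · exact fun h => hc ⟨a, Or.inr (Or.inr (Or.inr (Or.inr (Or.inl ⟨h.1.symm, h.2.symm⟩))))⟩
        · exact fun h => hc ⟨a, Or.inr (Or.inr (Or.inr (Or.inr (Or.inr (Or.inl
            ⟨h.2.symm, h.1.symm⟩)))))⟩
        · exact fun h => hc ⟨a, Or.inr (Or.inr (Or.inr (Or.inr (Or.inr (Or.inr (Or.inl
            ⟨h.1.symm, h.2.symm⟩))))))⟩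
        · exact fun h => hc ⟨a, Or.inr (Or.inr (Or.inr (Or.inr (Or.inr (Or.inr (Or.inr
            ⟨h.2.symm, h.1.symm⟩))))))⟩
      rw [Matrix.sub_apply, hz, sub_zero]
      exact hA01 s t
  · intro s
    rw [Matrix.sub_apply, hA.2.2.1 s, hdiag s, sub_zero]
  · intro s
    simp only [Matrix.sub_apply, Finset.sum_sub_distrib, hrow s, sub_zero]
    exact hA.2.2.2 s
  · intro a
    refine ⟨?_, ?_, ?_, ?_⟩
    · rw [Matrix.sub_apply, (hP a).2.2.1, hIK a]; ring
    · rw [Matrix.sub_apply, (hP a).2.2.2, hJL a]; ring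
    · rw [Matrix.sub_apply, (hP a).1, hIJ a]; ring
    · rw [Matrix.sub_apply, (hP a).2.1, hKL a]; ring

lemma chi_eq (N : ℕ) (A : Matrix (Fin N) (Fin N) ℝ)
    (h01 : ∀ s t, A s t = 0 ∨ A s t = 1) (i j k l : Fin N) :
    chiInd N i j k l A
      = if A i j = 1 ∧ A k l = 1 ∧ A i k = 0 ∧ A j l = 0 then 1 else 0 := by
  rcases h01 i j with h1 | h1 <;> rcases h01 k l with h2 | h2 <;>
    rcases h01 i k with h3 | h3 <;> rcases h01 j l with h4 | h4 <;>
    simp [chiInd, h1, h2, h3, h4]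

lemma sum_chi_filter (N b : ℕ) (𝒢 : Finset (Matrix (Fin N) (Fin N) ℝ))
    (h01 : ∀ A ∈ 𝒢, ∀ s t, A s t = 0 ∨ A s t = 1)
    (i j k l : Fin b → Fin N) (G : Matrix (Fin N) (Fin N) ℝ → ℝ) :
    ∑ A ∈ 𝒢, G A * ∏ a, chiInd N (i a) (j a) (k a) (l a) A
      = ∑ A ∈ 𝒢.filter (fun A => ∀ a, A (i a) (j a) = 1 ∧ A (k a) (l a) = 1 ∧
          A (i a) (k a) = 0 ∧ A (j a) (l a) = 0), G A := by
  rw [Finset.sum_filter]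
  refine Finset.sum_congr rfl fun A hA => ?_
  have : ∏ a, chiInd N (i a) (j a) (k a) (l a) A
      = if (∀ a, A (i a) (j a) = 1 ∧ A (k a) (l a) = 1 ∧ A (i a) (k a) = 0 ∧ A (j a) (l a) = 0)
        then 1 else 0 := by
    rw [Finset.prod_congr rfl fun a _ => chi_eq N A (h01 A hA) (i a) (j a) (k a) (l a),
      Finset.prod_boole]
    simp
  rw [this]
  split_ifs <;> ring

/-- for the uniform measure on simple `d`-regular graphs (given here
as the finset `𝒢` of all `d`-regular adjacency matrices), distinct indices
`i₁,j₁,k₁,l₁,…,i_b,j_b,k_b,l_b`, and any function `F`,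
`E[F(A)·∏_a χ_{i_a j_a}^{k_a l_a}(A)] = E[F(A + ∑_a ξ_{i_a j_a}^{k_a l_a})·∏_a χ_{i_a k_a}^{j_a l_a}(A)]`. -/
theorem switching_expectation_identity
    (N b : ℕ) (d : ℝ) (𝒢 : Finset (Matrix (Fin N) (Fin N) ℝ))
    (h𝒢 : ∀ A, A ∈ 𝒢 ↔ IsRegAdj N d A) (h𝒢ne : 𝒢.Nonempty)
    (i j k l : Fin b → Fin N)
    (hdist : Function.Injective
      (fun p : Fin b × Fin 4 => ![i p.1, j p.1, k p.1, l p.1] p.2))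
    (F : Matrix (Fin N) (Fin N) ℝ → ℝ) :
    (𝒢.card : ℝ)⁻¹ * ∑ A ∈ 𝒢, F A * ∏ a, chiInd N (i a) (j a) (k a) (l a) A
      = (𝒢.card : ℝ)⁻¹ * ∑ A ∈ 𝒢,
          F (A + ∑ a, xiMat N (i a) (j a) (k a) (l a)) *
            ∏ a, chiInd N (i a) (k a) (j a) (l a) A := by
  have hv : ∀ (a a' : Fin b) (p q : Fin 4),
      ![i a, j a, k a, l a] p = ![i a', j a', k a', l a'] q → a = a' ∧ p = q := by
    intro a a' p q h
    have h2 := @hdist (a, p) (a', q) h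
    exact ⟨congrArg Prod.fst h2, congrArg Prod.snd h2⟩
  have hii : ∀ a a', i a = i a' → a = a' := fun a a' h => (hv a a' 0 0 h).1
  have hjj : ∀ a a', j a = j a' → a = a' := fun a a' h => (hv a a' 1 1 h).1
  have hkk : ∀ a a', k a = k a' → a = a' := fun a a' h => (hv a a' 2 2 h).1
  have hij : ∀ a a', i a ≠ j a' := fun a a' h => by simpa using (hv a a' 0 1 h).2
  have hik : ∀ a a', i a ≠ k a' := fun a a' h => by simpa using (hv a a' 0 2 h).2
  have hil : ∀ a a', i a ≠ l a' := fun a a' h => by simpa using (hv a a' 0 3 h).2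
  have hjk : ∀ a a', j a ≠ k a' := fun a a' h => by simpa using (hv a a' 1 2 h).2
  have hjl : ∀ a a', j a ≠ l a' := fun a a' h => by simpa using (hv a a' 1 3 h).2
  have hkl : ∀ a a', k a ≠ l a' := fun a a' h => by simpa using (hv a a' 2 3 h).2
  set ξ := ∑ a, xiMat N (i a) (j a) (k a) (l a) with hξ
  have hswap : ∑ a, xiMat N (i a) (k a) (j a) (l a) = -ξ := by
    rw [hξ, ← Finset.sum_neg_distrib]
    exact Finset.sum_congr rfl fun a _ => xiMat_swap ..
  have h01 : ∀ A ∈ 𝒢, ∀ s t, A s t = 0 ∨ A s t = 1 := fun A hA => ((h𝒢 A).1 hA).2.1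
  congr 1
  rw [sum_chi_filter N b 𝒢 h01 i j k l F,
    sum_chi_filter N b 𝒢 h01 i k j l (fun A => F (A + ξ))]
  refine Finset.sum_bij' (fun A _ => A - ξ) (fun A _ => A + ξ) ?_ ?_ ?_ ?_ ?_
  · intro A hA
    rw [Finset.mem_filter] at hA ⊢
    obtain ⟨hfwd, hent⟩ := switch_forward N b d i j k l hii hjj hkk hij hik hil hjk hjl hkl
      A ((h𝒢 A).1 hA.1) hA.2
    exact ⟨(h𝒢 _).2 hfwd, hent⟩
  · intro A hA
    rw [Finset.mem_filter] at hA ⊢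
    obtain ⟨hfwd, hent⟩ := switch_forward N b d i k j l hii hkk hjj hik hij hil
      (fun a a' h => hjk a' a h.symm) hkl hjl A ((h𝒢 A).1 hA.1)
      (fun a => ⟨(hA.2 a).1, (hA.2 a).2.1, (hA.2 a).2.2.1, (hA.2 a).2.2.2⟩)
    rw [hswap, sub_neg_eq_add] at hfwd hent
    exact ⟨(h𝒢 _).2 hfwd, hent⟩
  · intro A _; exact sub_add_cancel A ξ
  · intro A _; exact add_sub_cancel_right A ξ
  · intro A _
    rw [sub_add_cancel]
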